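/- Cayley's second hyperdeterminant Det is covariant under local transformations: for any t ∈ ℂ²⊗ℂ²⊗ℂ² and linear maps m₁, m₂, m₃ : ℂ² → ℂ², Det((m₁⊗m₂⊗m₃)t) = (det m₁)²(det m₂)²(det m₃)² · Det(t). -/
import Mathlib


open scoped BigOperators

/-- A 3-tensor in `ℂ^a ⊗ ℂ^b ⊗ ℂ^c`, given by its coordinates. -/
abbrev T3 (a b c : ℕ) : Type := Fin a → Fin b → Fin c → ℂ

/-- Restriction of 3-tensors: `t ≥ t'` iff `t' = (m₁ ⊗ m₂ ⊗ m₃) t`. -/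
def res3 {a b c a' b' c' : ℕ} (t : T3 a b c) (t' : T3 a' b' c') : Prop :=
  ∃ (m₁ : Fin a' → Fin a → ℂ) (m₂ : Fin b' → Fin b → ℂ) (m₃ : Fin c' → Fin c → ℂ),
    ∀ i j k, t' i j k = ∑ p, ∑ q, ∑ r, m₁ i p * m₂ j q * m₃ k r * t p q r

/-- The W-state `e₀⊗e₀⊗e₁ + e₀⊗e₁⊗e₀ + e₁⊗e₀⊗e₀`. -/
def W : T3 2 2 2 := fun i j k => if (i : ℕ) + (j : ℕ) + (k : ℕ) = 1 then 1 else 0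

/-- The GHZ state `e₀⊗e₀⊗e₀ + e₁⊗e₁⊗e₁`. -/
def GHZ2 : T3 2 2 2 := fun i j k => if i = j ∧ j = k then 1 else 0

/-- The unit tensor `GHZ_r = Σ_i e_i⊗e_i⊗e_i`. -/
def GHZ (r : ℕ) : T3 r r r := fun i j k => if i = j ∧ j = k then 1 else 0

/-- Cayley's second hyperdeterminant of a tensor in `ℂ²⊗ℂ²⊗ℂ²`. -/
def Det (t : T3 2 2 2) : ℂ :=
    (t 0 0 0)^2*(t 1 1 1)^2 + (t 0 0 1)^2*(t 1 1 0)^2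
  + (t 0 1 0)^2*(t 1 0 1)^2 + (t 1 0 0)^2*(t 0 1 1)^2
  - 2*(t 0 0 0)*(t 0 0 1)*(t 1 1 0)*(t 1 1 1)
  - 2*(t 0 0 0)*(t 0 1 0)*(t 1 0 1)*(t 1 1 1)
  - 2*(t 0 0 0)*(t 0 1 1)*(t 1 0 0)*(t 1 1 1)
  - 2*(t 0 0 1)*(t 0 1 0)*(t 1 0 1)*(t 1 1 0)
  - 2*(t 0 0 1)*(t 0 1 1)*(t 1 1 0)*(t 1 0 0)
  - 2*(t 0 1 0)*(t 0 1 1)*(t 1 0 1)*(t 1 0 0)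
  + 4*(t 0 0 0)*(t 0 1 1)*(t 1 0 1)*(t 1 1 0)
  + 4*(t 0 0 1)*(t 0 1 0)*(t 1 0 0)*(t 1 1 1)

/-- Application of local linear maps `(m₁ ⊗ m₂ ⊗ m₃)` to a tensor in `ℂ²⊗ℂ²⊗ℂ²`. -/
noncomputable def app3 (m₁ m₂ m₃ : Matrix (Fin 2) (Fin 2) ℂ) (t : T3 2 2 2) : T3 2 2 2 :=
  fun i j k => ∑ p, ∑ q, ∑ r, m₁ i p * m₂ j q * m₃ k r * t p q r

noncomputable def A1 (m : Matrix (Fin 2) (Fin 2) ℂ) (t : T3 2 2 2) : T3 2 2 2 :=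
  fun i j k => ∑ p, m i p * t p j k

noncomputable def A2 (m : Matrix (Fin 2) (Fin 2) ℂ) (t : T3 2 2 2) : T3 2 2 2 :=
  fun i j k => ∑ q, m j q * t i q k

noncomputable def A3 (m : Matrix (Fin 2) (Fin 2) ℂ) (t : T3 2 2 2) : T3 2 2 2 :=
  fun i j k => ∑ r, m k r * t i j r

lemma app3_eq (m₁ m₂ m₃ : Matrix (Fin 2) (Fin 2) ℂ) (t : T3 2 2 2) :
    app3 m₁ m₂ m₃ t = A1 m₁ (A2 m₂ (A3 m₃ t)) := by
  funext i j k
  simp only [app3, A1, A2, A3, Fin.sum_univ_two]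
  ring

lemma Det_A1 (m : Matrix (Fin 2) (Fin 2) ℂ) (t : T3 2 2 2) :
    Det (A1 m t) = m.det ^ 2 * Det t := by
  simp only [Det, A1, Fin.sum_univ_two, Matrix.det_fin_two]
  ring

lemma Det_A2 (m : Matrix (Fin 2) (Fin 2) ℂ) (t : T3 2 2 2) :
    Det (A2 m t) = m.det ^ 2 * Det t := by
  simp only [Det, A2, Fin.sum_univ_two, Matrix.det_fin_two]
  ring

lemma Det_A3 (m : Matrix (Fin 2) (Fin 2) ℂ) (t : T3 2 2 2) :
    Det (A3 m t) = m.det ^ 2 * Det t := by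
  simp only [Det, A3, Fin.sum_univ_two, Matrix.det_fin_two]
  ring

/-- Cayley's second hyperdeterminant is covariant:
`Det((m₁⊗m₂⊗m₃)t) = (det m₁)²(det m₂)²(det m₃)² Det(t)`. -/
theorem Det_covariant (m₁ m₂ m₃ : Matrix (Fin 2) (Fin 2) ℂ) (t : T3 2 2 2) :
    Det (app3 m₁ m₂ m₃ t) = (m₁.det)^2 * (m₂.det)^2 * (m₃.det)^2 * Det t := by
  rw [app3_eq, Det_A1, Det_A2, Det_A3]
  ring
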